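/- Let O be a finite set of pairwise commuting n-qubit Pauli observables, each different from I^⊗n, and B ⊆ O a maximally independent subset. Define a : O → {−1,1} by t = a(t)·∏_{s∈A_t} s, where A_t is the unique nonempty subset of B whose product equals ±t. Then for every subset c ⊆ O whose product satisfies ∏_{t∈c} t = s(c)·I^⊗n with s(c) ∈ {−1,1}, one has ∏_{t∈c} a(t) = s(c). -/

import Mathlib

open scoped Classical
open Matrix

noncomputable section

/-- The space of `n`-qubit operators, realized as matrices indexed by
`Fin n → Fin 2` (the `n`-fold tensor-product index). -/
abbrev QMat (n : ℕ) := Matrix (Fin n → Fin 2) (Fin n → Fin 2) ℂ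

/-- The four Pauli matrices `I, X, Y, Z`. -/
def pauliMat : Fin 4 → Matrix (Fin 2) (Fin 2) ℂ
  | ⟨0, _⟩ => 1
  | ⟨1, _⟩ => !![0, 1; 1, 0]
  | ⟨2, _⟩ => !![0, -Complex.I; Complex.I, 0]
  | ⟨3, _⟩ => !![1, 0; 0, -1]

/-- The `n`-fold Kronecker (tensor) product `G₁ ⊗ ⋯ ⊗ Gₙ` of the Pauli matrices
selected by `g : Fin n → Fin 4`, as a matrix indexed by `Fin n → Fin 2`. -/
def nPauli {n : ℕ} (g : Fin n → Fin 4) : QMat n :=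
  Matrix.of fun r c => ∏ k, pauliMat (g k) (r k) (c k)

/-- `M` is an `n`-qubit Pauli observable. -/
def IsPauliObs (n : ℕ) (M : QMat n) : Prop := ∃ g : Fin n → Fin 4, M = nPauli g

/-- `I^⊗n`, the `n`-fold tensor product of the identity. -/
def idN (n : ℕ) : QMat n := nPauli (fun _ => ⟨0, by omega⟩)

/-- Product of `f` over a finite set of naturals, taken in increasing order
(well-defined without commutativity; agrees with the unordered product when the
factors pairwise commute). -/
def natFinsetProd {M : Type*} [Monoid M] (s : Finset ℕ) (f : ℕ → M) : M :=
  ((s.sort (· ≤ ·)).map f).prod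

/-- `(V,H,G)` is a hypergram: `V` a nonempty finite vertex set, `H` a set of
nonempty hyperedges covering `V`, `G` a set of 2-element edges on `V` forming a
simple reduced graph, no edge of `G` being contained in a hyperedge of `H`. -/
def IsHypergram (V : Finset ℕ) (H G : Finset (Finset ℕ)) : Prop :=
  V.Nonempty ∧
  (∀ h ∈ H, h ⊆ V ∧ h.Nonempty) ∧
  (∀ v ∈ V, ∃ h ∈ H, v ∈ h) ∧
  (∀ e ∈ G, e ⊆ V ∧ e.card = 2) ∧
  (∀ v ∈ V, ∃ e ∈ G, v ∈ e) ∧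
  (∀ v ∈ V, ∀ w ∈ V,
    (∀ u ∈ V, (({v, u} : Finset ℕ) ∈ G ↔ ({w, u} : Finset ℕ) ∈ G)) → v = w) ∧
  (∀ e ∈ G, ∀ h ∈ H, ¬ e ⊆ h)

/-- `α` is an `n`-qubit Pauli assignment of the hypergram `(V,H,G)`. -/
def IsPauliAssignment (V : Finset ℕ) (H G : Finset (Finset ℕ)) (n : ℕ)
    (α : ℕ → QMat n) : Prop :=
  (∀ v ∈ V, IsPauliObs n (α v)) ∧
  (∀ v ∈ V, α v ≠ idN n) ∧
  (∀ v₁ ∈ V, ∀ v₂ ∈ V, α v₁ = α v₂ → v₁ = v₂) ∧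
  (∀ v₁ ∈ V, ∀ v₂ ∈ V, v₁ ≠ v₂ →
    (α v₁ * α v₂ = -(α v₂ * α v₁) ↔ ({v₁, v₂} : Finset ℕ) ∈ G)) ∧
  (∀ h ∈ H, natFinsetProd h α = idN n ∨ natFinsetProd h α = -(idN n))

/-- The sign `sgn_α(h) ∈ {−1,1}` of a hyperedge `h`: `∏_{v∈h} α(v) = sgn_α(h)·I^⊗n`. -/
def quantumSgn {n : ℕ} (α : ℕ → QMat n) (h : Finset ℕ) : ℤ :=
  if natFinsetProd h α = idN n then 1 else -1

/-- The sign `sgn_a(h) = ∏_{v∈h} a(v)` of a hyperedge for a classical assignment. -/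
def classicalSgn (a : ℕ → ℤ) (h : Finset ℕ) : ℤ := ∏ v ∈ h, a v

/-- The contextuality degree of a Pauli assignment: the minimum over classical
assignments `a : V → {−1,1}` of the number of hyperedges whose signs differ. -/
def contextualityDegree {n : ℕ} (H : Finset (Finset ℕ)) (α : ℕ → QMat n) : ℕ :=
  sInf { d : ℕ | ∃ a : ℕ → ℤ, (∀ v, a v = 1 ∨ a v = -1) ∧
    d = (H.filter (fun h => quantumSgn α h ≠ classicalSgn a h)).card }

/-- The context (incidence) matrix of a hypergram over 𝔽₂. -/
def contextMatrix (V : Finset ℕ) (H : Finset (Finset ℕ)) :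
    Matrix {h // h ∈ H} {v // v ∈ V} (ZMod 2) :=
  Matrix.of fun h v => if v.1 ∈ h.1 then 1 else 0

/-- The anticommutation (adjacency) matrix of a hypergram over 𝔽₂. -/
def anticommMatrix (V : Finset ℕ) (G : Finset (Finset ℕ)) :
    Matrix {v // v ∈ V} {v // v ∈ V} (ZMod 2) :=
  Matrix.of fun i j => if ({i.1, j.1} : Finset ℕ) ∈ G then 1 else 0

/-- The standard symplectic form on `𝔽₂^{2n}`:
`⟨x,y⟩ = Σ_{k=1}^{n} (x_{2k−1} y_{2k} + x_{2k} y_{2k−1})`. -/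
def sympForm (n : ℕ) (x y : Fin (2 * n) → ZMod 2) : ZMod 2 :=
  ∑ k : Fin n,
    (x ⟨2 * k.1, by have := k.2; omega⟩ * y ⟨2 * k.1 + 1, by have := k.2; omega⟩ +
     x ⟨2 * k.1 + 1, by have := k.2; omega⟩ * y ⟨2 * k.1, by have := k.2; omega⟩)

/-- The single-qubit encoding `ψ(I)=(0,0), ψ(X)=(0,1), ψ(Y)=(1,1), ψ(Z)=(1,0)`. -/
def psi4 : Fin 4 → (ZMod 2) × (ZMod 2)
  | ⟨0, _⟩ => (0, 0)
  | ⟨1, _⟩ => (0, 1)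
  | ⟨2, _⟩ => (1, 1)
  | ⟨3, _⟩ => (1, 0)

/-- The encoding `ψ` of an `n`-qubit Pauli observable (given by its tensor
factors `g`) as a vector of `𝔽₂^{2n}`, concatenating the per-factor encodings. -/
def psiVec {n : ℕ} (g : Fin n → Fin 4) : Fin (2 * n) → ZMod 2 := fun idx =>
  if idx.1 % 2 = 0 then (psi4 (g ⟨idx.1 / 2, by have := idx.2; omega⟩)).1
  else (psi4 (g ⟨idx.1 / 2, by have := idx.2; omega⟩)).2

/-- All pairs of elements of `S` commute. -/
def PairComm {n : ℕ} (S : Finset (QMat n)) : Prop := ∀ a ∈ S, ∀ b ∈ S, a * b = b * a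

/-- The (well-defined) product of a finite set of pairwise commuting matrices. -/
def commProd {n : ℕ} (S : Finset (QMat n)) (h : PairComm S) : QMat n :=
  S.noncommProd id (fun a ha b hb _ => h a ha b hb)

/-- Pairwise commutation is inherited by subsets. -/
def pairCommOfSubset {n : ℕ} {S T : Finset (QMat n)} (hST : S ⊆ T) (h : PairComm T) :
    PairComm S := fun a ha b hb => h a (hST ha) b (hST hb)

/-- `Q` (pairwise commuting) is independent: no nonempty subset has product `±I^⊗n`. -/
def IsIndep {n : ℕ} (Q : Finset (QMat n)) (hQ : PairComm Q) : Prop :=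
  ∀ S : Finset (QMat n), ∀ (hS : S ⊆ Q), S.Nonempty →
    commProd S (pairCommOfSubset hS hQ) ≠ idN n ∧
    commProd S (pairCommOfSubset hS hQ) ≠ -(idN n)

/-- The vertex set `{1, …, 15}`. -/
def V15 : Finset ℕ := Finset.Icc 1 15

/-- The 15 lines of the doily. -/
def doilyLines : Finset (Finset ℕ) :=
  { {1,2,3}, {1,8,9}, {1,10,11}, {2,4,6}, {2,5,7}, {3,12,15}, {3,13,14},
    {4,8,12}, {4,10,14}, {5,8,13}, {5,10,15}, {6,9,15}, {6,11,13},
    {7,9,14}, {7,11,12} }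

/-- The 10 lines of the two-spread `H_{2s}`. -/
def twoSpreadLines : Finset (Finset ℕ) :=
  { {1,2,3}, {1,10,11}, {2,4,6}, {3,13,14}, {4,8,12}, {5,8,13}, {5,10,15},
    {6,9,15}, {7,9,14}, {7,11,12} }

/-- The anticommutation graph `G_d = G_{2s}`: pairs of distinct vertices not on a
common doily line. -/
def doilyG : Finset (Finset ℕ) :=
  (V15.powersetCard 2).filter (fun e => ∀ h ∈ doilyLines, ¬ e ⊆ h)

/-!
Pauli observables square to the identity, so for commuting observables products over subsets of `B`
multiply by symmetric difference of the subsets. Expanding each `t ∈ c` as `a(t) · ∏_{A_t}` thus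
gives `∏_c t = (∏_c a(t)) · ∏_S` for some `S ⊆ B`. If `∏_c t = s(c) · I`, then `∏_S = ±I`, so
independence of `B` forces `S = ∅`, and comparing scalars gives `∏_c a(t) = s(c)`.
-/

open scoped symmDiff
open Function

namespace Finset

variable {α M : Type*} [Monoid M] [DecidableEq α]

theorem noncommProd_mul_noncommProd_eq_symmDiff {S T : Finset α} (f : α → M)
    (comm : (↑(S ∪ T) : Set α).Pairwise (Commute on f)) (hS : ∀ x ∈ S, f x * f x = 1) :
    S.noncommProd f (comm.mono <| coe_subset.2 subset_union_left) *
        T.noncommProd f (comm.mono <| coe_subset.2 subset_union_right) =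
      (S ∆ T).noncommProd f (comm.mono <| coe_subset.2 symmDiff_subset_union) := by
  induction S using Finset.induction_on with
  | empty =>
    rw [noncommProd_empty, one_mul]
    exact noncommProd_congr (bot_symmDiff T).symm (fun _ _ => rfl) _
  | @insert x S hxS ih =>
    have commS : (↑(S ∪ T) : Set α).Pairwise (Commute on f) :=
      comm.mono <| coe_subset.2 <| union_subset_union (subset_insert x S) Subset.rfl
    rw [noncommProd_insert_of_notMem _ _ _ _ hxS, mul_assoc,
      ih commS fun y hy => hS y (mem_insert_of_mem hy)]
    by_cases hxT : x ∈ T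
    · have hx : x ∈ S ∆ T := by simp [mem_symmDiff, hxT, hxS]
      have hset : insert x S ∆ T = (S ∆ T).erase x := by
        ext y; by_cases y = x <;> simp_all [mem_symmDiff]
      rw [noncommProd_congr hset (fun _ _ => rfl), ← mul_noncommProd_erase _ hx, ← mul_assoc,
        hS x (mem_insert_self x S), one_mul]
    · have hx : x ∉ S ∆ T := by simp [mem_symmDiff, hxT, hxS]
      have hset : insert x S ∆ T = insert x (S ∆ T) := by
        ext y; by_cases y = x <;> simp_all [mem_symmDiff]
      rw [noncommProd_congr hset (fun _ _ => rfl)]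
      exact (noncommProd_insert_of_notMem _ _ _ _ hx).symm

end Finset

namespace Matrix

theorem of_prod_mul_of_prod {ι m R : Type*} [Fintype ι] [DecidableEq ι] [Fintype m]
    [CommSemiring R] (A A' : ι → Matrix m m R) :
    (of fun r c : ι → m => ∏ k, A k (r k) (c k)) * (of fun r c => ∏ k, A' k (r k) (c k)) =
      of fun r c => ∏ k, (A k * A' k) (r k) (c k) := by
  ext r c
  simp only [mul_apply, of_apply, ← Finset.prod_mul_distrib]
  exact (Fintype.prod_sum fun k j => A k (r k) j * A' k j (c k)).symm

theorem of_prod_one {ι m R : Type*} [Fintype ι] [DecidableEq m] [CommSemiring R] :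
    (of fun r c : ι → m => ∏ k, (1 : Matrix m m R) (r k) (c k)) = 1 := by
  ext r c
  simp [one_apply, Finset.prod_boole, funext_iff]

end Matrix

theorem pauliMat_mul_self (x : Fin 4) : pauliMat x * pauliMat x = 1 := by
  fin_cases x <;> simp [pauliMat, Matrix.one_fin_two]

theorem nPauli_mul_self {n : ℕ} (g : Fin n → Fin 4) : nPauli g * nPauli g = 1 := by
  simp only [nPauli, Matrix.of_prod_mul_of_prod, pauliMat_mul_self, Matrix.of_prod_one]

theorem IsPauliObs.mul_self {n : ℕ} {M : QMat n} (hM : IsPauliObs n M) : M * M = 1 := by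
  obtain ⟨g, rfl⟩ := hM
  exact nPauli_mul_self g

theorem idN_eq_one (n : ℕ) : idN n = 1 :=
  Matrix.of_prod_one

section

variable {n : ℕ} {O B : Finset (QMat n)}

theorem commProd_empty (h : PairComm (∅ : Finset (QMat n))) : commProd ∅ h = 1 :=
  Finset.noncommProd_empty _ _

theorem exists_subset_commProd_eq_smul (hcomm : PairComm O) (hBO : B ⊆ O)
    (hB : ∀ b ∈ B, b * b = 1) (a : QMat n → ℤ)
    (hdec : ∀ t ∈ O, ∃ (A : Finset (QMat n)) (hA : A ⊆ B),
      t = (a t : ℂ) • commProd A (pairCommOfSubset (hA.trans hBO) hcomm))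
    {c : Finset (QMat n)} (hc : c ⊆ O) :
    ∃ (S : Finset (QMat n)) (hS : S ⊆ B), commProd c (pairCommOfSubset hc hcomm) =
      ((∏ t ∈ c, a t : ℤ) : ℂ) • commProd S (pairCommOfSubset (hS.trans hBO) hcomm) := by
  induction c using Finset.induction_on with
  | empty => exact ⟨∅, Finset.empty_subset B, by simp [commProd_empty]⟩
  | @insert t c htc ih =>
    obtain ⟨S, hSB, hcS⟩ := ih ((Finset.subset_insert t c).trans hc)
    obtain ⟨A, hAB, htA⟩ := hdec t (hc (Finset.mem_insert_self t c))
    have hAS : A ∪ S ⊆ O := (Finset.union_subset hAB hSB).trans hBO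
    refine ⟨A ∆ S, Finset.symmDiff_subset_union.trans (Finset.union_subset hAB hSB), ?_⟩
    calc commProd (insert t c) (pairCommOfSubset hc hcomm)
        = t * commProd c (pairCommOfSubset ((Finset.subset_insert t c).trans hc) hcomm) :=
          Finset.noncommProd_insert_of_notMem _ _ _ _ htc
      _ = ((a t * ∏ t ∈ c, a t : ℤ) : ℂ) •
            (commProd A (pairCommOfSubset (hAB.trans hBO) hcomm) *
              commProd S (pairCommOfSubset (hSB.trans hBO) hcomm)) := by
          conv_lhs => rw [hcS, htA]
          rw [smul_mul_smul_comm, Int.cast_mul]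
      _ = _ := by
          rw [Finset.prod_insert htc]
          congr 1
          exact Finset.noncommProd_mul_noncommProd_eq_symmDiff id
            (fun x hx y hy _ => hcomm x (hAS hx) y (hAS hy)) fun x hx => hB x (hAB hx)

theorem IsIndep.eq_empty_of_commProd_eq_smul_idN {hB : PairComm B} (hind : IsIndep B hB)
    {S : Finset (QMat n)} (hS : S ⊆ B) {ε : ℤ} (hε : ε = 1 ∨ ε = -1)
    (h : commProd S (pairCommOfSubset hS hB) = (ε : ℂ) • idN n) : S = ∅ := by
  by_contra hne
  have := hind S hS (Finset.nonempty_iff_ne_empty.2 hne)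
  rcases hε with rfl | rfl
  · exact this.1 (by simpa using h)
  · exact this.2 (by simpa using h)

theorem intCast_smul_idN_injective (n : ℕ) : Injective fun x : ℤ => (x : ℂ) • idN n :=
  fun _ _ h => Int.cast_injective (smul_left_injective ℂ (idN_eq_one n ▸ one_ne_zero) h)

end

theorem basis_classical_assignment_satisfies_signs_general
    (n : ℕ) (O : Finset (QMat n))
    (hObs : ∀ o ∈ O, IsPauliObs n o)
    (hcomm : PairComm O)
    (B : Finset (QMat n)) (hBsub : B ⊆ O)
    (hBindep : IsIndep B (pairCommOfSubset hBsub hcomm))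
    (a : QMat n → ℤ)
    (ha : ∀ t ∈ O, a t = 1 ∨ a t = -1)
    (hdec : ∀ t ∈ O, ∃ (A : Finset (QMat n)) (hA : A ⊆ B), A.Nonempty ∧
      t = (a t : ℂ) • commProd A (pairCommOfSubset (hA.trans hBsub) hcomm)) :
    ∀ c (hc : c ⊆ O) (s : ℤ), (s = 1 ∨ s = -1) →
      commProd c (pairCommOfSubset hc hcomm) = (s : ℂ) • idN n →
      (∏ t ∈ c, a t) = s := by
  intro c hc s hs hprod
  obtain ⟨S, hSB, hcS⟩ := exists_subset_commProd_eq_smul hcomm hBsub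
    (fun b hb => (hObs b (hBsub hb)).mul_self) a
    (fun t ht => (hdec t ht).imp fun A ⟨hAB, _, htA⟩ => ⟨hAB, htA⟩) hc
  set p := ∏ t ∈ c, a t
  have hp : p * p = 1 := by
    rw [← Finset.prod_mul_distrib]
    exact Finset.prod_eq_one fun t ht => by rcases ha t (hc ht) with h | h <;> simp [h]
  have hS : commProd S (pairCommOfSubset (hSB.trans hBsub) hcomm) = ((p * s : ℤ) : ℂ) • idN n := by
    rw [Int.cast_mul, ← smul_smul, ← hprod, hcS, smul_smul, ← Int.cast_mul, hp, Int.cast_one,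
      one_smul]
  have hps : p * s = 1 ∨ p * s = -1 :=
    Int.isUnit_iff.1 ((IsUnit.of_mul_eq_one p hp).mul (Int.isUnit_iff.2 hs))
  obtain rfl := hBindep.eq_empty_of_commProd_eq_smul_idN hSB hps hS
  have hps1 : p * s = 1 := by
    apply intCast_smul_idN_injective n
    simp only [Int.cast_one, one_smul]
    rw [← hS, commProd_empty, idN_eq_one]
  linear_combination s * hp - p * hps1

/-- The classical assignment `a` defined from a maximally
independent subset `B` by `t = a(t)·∏_{s∈A_t} s` satisfies all sign constraints:
`∏_{t∈c} a(t) = s(c)` whenever `∏_{t∈c} t = s(c)·I^⊗n`. -/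
theorem basis_classical_assignment_satisfies_signs
    (n : ℕ) (O : Finset (QMat n))
    (hObs : ∀ o ∈ O, IsPauliObs n o)
    (hneI : ∀ o ∈ O, o ≠ idN n)
    (hcomm : PairComm O)
    (B : Finset (QMat n)) (hBsub : B ⊆ O)
    (hBindep : IsIndep B (pairCommOfSubset hBsub hcomm))
    (hBmax : ∀ t (ht : t ∈ O), t ∉ B →
      ¬ IsIndep (insert t B) (pairCommOfSubset (Finset.insert_subset ht hBsub) hcomm))
    (a : QMat n → ℤ)
    (ha : ∀ t ∈ O, a t = 1 ∨ a t = -1)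
    (hdec : ∀ t ∈ O, ∃ (A : Finset (QMat n)) (hA : A ⊆ B), A.Nonempty ∧
      t = (a t : ℂ) • commProd A (pairCommOfSubset (hA.trans hBsub) hcomm)) :
    ∀ c (hc : c ⊆ O) (s : ℤ), (s = 1 ∨ s = -1) →
      commProd c (pairCommOfSubset hc hcomm) = (s : ℂ) • idN n →
      (∏ t ∈ c, a t) = s :=
  basis_classical_assignment_satisfies_signs_general n O hObs hcomm B hBsub hBindep a ha hdec
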